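/- For every individual i ∈ I and every set A ⊆ I \ {i}, if i ∈ C^OA(A ∪ {i}) then either C^OA(A ∪ {i}) = C^OA(A) ∪ {i}, or C^OA(A ∪ {i}) = (C^OA(A) ∪ {i}) \ {j} for some j ∈ C^OA(A); and if i ∉ C^OA(A ∪ {i}) then C^OA(A ∪ {i}) = C^OA(A). -/

import Mathlib

open Finset

variable {α : Type*} [Fintype α] [DecidableEq α] [LinearOrder α]
variable {ρ : Type*} [Fintype ρ] [DecidableEq ρ]

/-- The top-`k` elements of `A` under the linear (merit) order on `α`, where
higher means more meritorious: the members of `A` that have fewer than `k`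
strictly higher-ranked elements in `A`.  If `|A| ≤ k` this is all of `A`. -/
def topk (k : ℕ) (A : Finset α) : Finset α :=
  A.filter fun i => (A.filter fun j => i < j).card < k

/-- Open-category selection of the over-and-above choice rule: the
`min(qo, |A ∩ acc|)` highest-ranked acceptable applicants. -/
def oaOpen (acc : Finset α) (qo : ℕ) (A : Finset α) : Finset α :=
  topk qo (A ∩ acc)

/-- Reserve-category-`r` selection of the over-and-above choice rule: the
`q r` highest-ranked acceptable type-`r` applicants not selected for the
open category. -/
def oaRes (acc : Finset α) (t : α → Option ρ) (qo : ℕ) (q : ρ → ℕ) (r : ρ)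
    (A : Finset α) : Finset α :=
  topk (q r) (((A ∩ acc) \ oaOpen acc qo A).filter fun i => t i = some r)

/-- The set of applicants chosen by the over-and-above choice rule. -/
def oaChosen (acc : Finset α) (t : α → Option ρ) (qo : ℕ) (q : ρ → ℕ)
    (A : Finset α) : Finset α :=
  oaOpen acc qo A ∪ Finset.univ.biUnion fun r => oaRes acc t qo q r A

/-! Two properties of the over-and-above rule `C` suffice. Substitutability: an applicant
chosen from `A ∪ {i}` is chosen from `A`, since `topk` is substitutable and each reserve pool
only grows when applicants are added; hence `C(A ∪ {i}) ⊆ C(A) ∪ {i}`. Size monotonicity: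
`#(topk k S) = min k #S`, and the open pool and every reserve pool grow with the applicant set,
so `#C(A) ≤ #C(A ∪ {i})`. A set squeezed between these bounds is `C(A)`, `C(A) ∪ {i}` or
`(C(A) ∪ {i}) \ {j}`. -/

namespace Finset

variable {β : Type*} [DecidableEq β] {s t : Finset β} {a : β}

theorem eq_of_subset_insert_of_card_le_of_notMem (hts : t ⊆ insert a s) (hcard : #s ≤ #t)
    (ha : a ∉ t) : t = s :=
  eq_of_subset_of_card_le ((subset_insert_iff_of_notMem ha).mp hts) hcard

theorem eq_insert_or_eq_insert_sdiff_of_subset_insert (hts : t ⊆ insert a s) (hcard : #s ≤ #t)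
    (ha : a ∈ t) : t = insert a s ∨ ∃ j ∈ s, t = insert a s \ {j} := by
  by_cases has : a ∈ s
  · rw [insert_eq_of_mem has] at hts ⊢
    exact Or.inl (eq_of_subset_of_card_le hts hcard)
  have herase : t.erase a ⊆ s := subset_insert_iff.mp hts
  have hdropped : #(s \ t.erase a) ≤ 1 := by
    rw [card_sdiff_of_subset herase, card_erase_of_mem ha]
    omega
  rcases Nat.le_one_iff_eq_zero_or_eq_one.mp hdropped with h | h
  · left
    rw [card_eq_zero, sdiff_eq_empty_iff_subset] at h
    rw [← insert_erase ha, subset_antisymm herase h]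
  · right
    obtain ⟨j, hj⟩ := card_eq_one.mp h
    have hjs : j ∈ s := (mem_sdiff.mp (hj ▸ mem_singleton_self j)).1
    refine ⟨j, hjs, ?_⟩
    rw [insert_sdiff_of_notMem s (notMem_singleton.mpr fun h : a = j => has (h ▸ hjs)), ← hj,
      sdiff_sdiff_eq_self herase, insert_erase ha]

end Finset

section TopK

variable {ι : Type*} [LinearOrder ι] {k : ℕ} {S T : Finset ι} {x : ι}

theorem mem_topk : x ∈ topk k S ↔ x ∈ S ∧ #{y ∈ S | x < y} < k := by
  simp [topk]

theorem topk_subset : topk k S ⊆ S := filter_subset _ _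

theorem mem_topk_of_subset (hST : S ⊆ T) (hx : x ∈ S) (h : x ∈ topk k T) : x ∈ topk k S :=
  mem_topk.mpr ⟨hx, (card_le_card (filter_subset_filter _ hST)).trans_lt (mem_topk.mp h).2⟩

theorem card_topk [DecidableEq ι] : #(topk k S) = min k #S := by
  induction S using Finset.induction_on_min with
  | empty => simp [topk]
  | insert a S ha ih =>
    have haS : a ∉ S := fun h => lt_irrefl a (ha a h)
    have hbelow : {y ∈ insert a S | a < y} = S := by
      rw [filter_insert, if_neg (lt_irrefl a), filter_true_of_mem ha]
    have habove : ∀ y ∈ S, {z ∈ insert a S | y < z} = {z ∈ S | y < z} := fun y hy => by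
      rw [filter_insert, if_neg (ha y hy).not_gt]
    have hS : (S.filter fun y => #{z ∈ insert a S | y < z} < k) = topk k S :=
      filter_congr fun y hy => by rw [habove y hy]
    rw [topk, filter_insert, hbelow, hS, card_insert_of_notMem haS]
    split_ifs with hk
    · rw [card_insert_of_notMem fun h => haS (topk_subset h), ih]
      omega
    · rw [ih]
      omega

theorem card_topk_le_card_topk (hST : S ⊆ T) : #(topk k S) ≤ #(topk k T) := by
  classical
  rw [card_topk, card_topk]
  exact min_le_min_left k (card_le_card hST)

end TopK

section OverAndAbove

variable {β κ : Type*} [DecidableEq β] [LinearOrder β] [DecidableEq κ]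
  (acc : Finset β) (t : β → Option κ) (qo : ℕ) (q : κ → ℕ) {A B : Finset β} {x : β}

def oaPool (r : κ) (A : Finset β) : Finset β :=
  ((A ∩ acc) \ oaOpen acc qo A).filter fun i => t i = some r

theorem mem_oaPool {r : κ} :
    x ∈ oaPool acc t qo r A ↔ (x ∈ A ∩ acc ∧ x ∉ oaOpen acc qo A) ∧ t x = some r := by
  simp only [oaPool, mem_filter, mem_sdiff]

theorem mem_oaOpen_of_subset (hAB : A ⊆ B) (hx : x ∈ A) (h : x ∈ oaOpen acc qo B) :
    x ∈ oaOpen acc qo A :=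
  mem_topk_of_subset (inter_subset_inter_right hAB)
    (mem_inter.mpr ⟨hx, (mem_inter.mp (topk_subset h)).2⟩) h

theorem oaPool_mono (hAB : A ⊆ B) (r : κ) : oaPool acc t qo r A ⊆ oaPool acc t qo r B := by
  intro y hy
  obtain ⟨⟨hyA, hyOpen⟩, hty⟩ := (mem_oaPool acc t qo).mp hy
  exact (mem_oaPool acc t qo).mpr
    ⟨⟨inter_subset_inter_right hAB hyA,
      fun h => hyOpen (mem_oaOpen_of_subset acc qo hAB (mem_inter.mp hyA).1 h)⟩, hty⟩

variable [Fintype κ]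

theorem oaChosen_subset : oaChosen acc t qo q A ⊆ A := by
  intro y hy
  rcases mem_union.mp hy with hOpen | hRes
  · exact (mem_inter.mp (topk_subset hOpen)).1
  · obtain ⟨r, -, hr⟩ := mem_biUnion.mp hRes
    exact (mem_inter.mp ((mem_oaPool acc t qo).mp (topk_subset hr)).1.1).1

theorem mem_oaChosen_of_subset (hAB : A ⊆ B) (hx : x ∈ A) (h : x ∈ oaChosen acc t qo q B) :
    x ∈ oaChosen acc t qo q A := by
  rcases mem_union.mp h with hOpen | hRes
  · exact mem_union_left _ (mem_oaOpen_of_subset acc qo hAB hx hOpen)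
  by_cases hxOpen : x ∈ oaOpen acc qo A
  · exact mem_union_left _ hxOpen
  obtain ⟨r, -, hr⟩ := mem_biUnion.mp hRes
  obtain ⟨⟨hxB, -⟩, htx⟩ := (mem_oaPool acc t qo).mp (topk_subset hr)
  have hxPool : x ∈ oaPool acc t qo r A :=
    (mem_oaPool acc t qo).mpr ⟨⟨mem_inter.mpr ⟨hx, (mem_inter.mp hxB).2⟩, hxOpen⟩, htx⟩
  exact mem_union_right _ (mem_biUnion.mpr
    ⟨r, mem_univ r, mem_topk_of_subset (oaPool_mono acc t qo hAB r) hxPool hr⟩)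

theorem oaChosen_insert_subset (i : β) (A : Finset β) :
    oaChosen acc t qo q (insert i A) ⊆ insert i (oaChosen acc t qo q A) := by
  intro y hy
  rcases eq_or_ne y i with rfl | hyi
  · exact mem_insert_self y _
  · exact mem_insert_of_mem (mem_oaChosen_of_subset acc t qo q (subset_insert i A)
      (mem_of_mem_insert_of_ne (oaChosen_subset acc t qo q hy) hyi) hy)

theorem card_oaChosen :
    #(oaChosen acc t qo q A) = #(oaOpen acc qo A) + ∑ r, #(oaRes acc t qo q r A) := by
  have hRes : ∀ r, oaRes acc t qo q r A ⊆ oaPool acc t qo r A := fun r => topk_subset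
  have hdisjoint : ((univ : Finset κ) : Set κ).PairwiseDisjoint (fun r => oaRes acc t qo q r A) := by
    intro r _ r' _ hrr'
    refine disjoint_left.mpr fun y hy hy' => hrr' ?_
    exact Option.some.inj
      (((mem_oaPool acc t qo).mp (hRes r hy)).2.symm.trans ((mem_oaPool acc t qo).mp (hRes r' hy')).2)
  rw [oaChosen, card_union_of_disjoint, card_biUnion hdisjoint]
  refine disjoint_left.mpr fun y hyOpen hyRes => ?_
  obtain ⟨r, -, hr⟩ := mem_biUnion.mp hyRes
  exact ((mem_oaPool acc t qo).mp (hRes r hr)).1.2 hyOpen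

theorem card_oaChosen_le_card_oaChosen (hAB : A ⊆ B) :
    #(oaChosen acc t qo q A) ≤ #(oaChosen acc t qo q B) := by
  rw [card_oaChosen, card_oaChosen]
  exact add_le_add (card_topk_le_card_topk (inter_subset_inter_right hAB))
    (sum_le_sum fun r _ => card_topk_le_card_topk (oaPool_mono acc t qo hAB r))

end OverAndAbove

theorem oa_chosen_insert_general
    (acc : Finset α) (t : α → Option ρ) (qo : ℕ) (q : ρ → ℕ)
    (i : α) (A : Finset α) :
    (i ∈ oaChosen acc t qo q (insert i A) →
      oaChosen acc t qo q (insert i A) = insert i (oaChosen acc t qo q A) ∨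
      ∃ j ∈ oaChosen acc t qo q A,
        oaChosen acc t qo q (insert i A) =
          insert i (oaChosen acc t qo q A) \ {j}) ∧
    (i ∉ oaChosen acc t qo q (insert i A) →
      oaChosen acc t qo q (insert i A) = oaChosen acc t qo q A) := by
  have hsub := oaChosen_insert_subset acc t qo q i A
  have hcard := card_oaChosen_le_card_oaChosen acc t qo q (subset_insert i A)
  exact ⟨eq_insert_or_eq_insert_sdiff_of_subset_insert hsub hcard,
    eq_of_subset_insert_of_card_le_of_notMem hsub hcard⟩

/-- Adding an individual `i` to the applicant set: if `i` is
chosen from `A ∪ {i}`, then the chosen set either gains exactly `i`, or gains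
`i` at the expense of exactly one previously chosen individual `j`; if `i` is
not chosen, the chosen set is unchanged. -/
theorem oa_chosen_insert
    (acc : Finset α) (t : α → Option ρ) (qo : ℕ) (q : ρ → ℕ)
    (i : α) (A : Finset α) (hiA : i ∉ A) :
    (i ∈ oaChosen acc t qo q (insert i A) →
      oaChosen acc t qo q (insert i A) = insert i (oaChosen acc t qo q A) ∨
      ∃ j ∈ oaChosen acc t qo q A,
        oaChosen acc t qo q (insert i A) =
          insert i (oaChosen acc t qo q A) \ {j}) ∧
    (i ∉ oaChosen acc t qo q (insert i A) →
      oaChosen acc t qo q (insert i A) = oaChosen acc t qo q A) :=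
  oa_chosen_insert_general acc t qo q i A
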